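/- The sequence of frames (H_n)_{n∈ω}, where H_n = ⟨{a} ∪ B_n ∪ C_n, E_n⟩ with C_n = {k : k ≤ n+1}, B_n = {X ⊆ C_n : |X| = 2}, and E_n = {(a,u) : u ∈ B_n ∪ C_n} ∪ {(b,c) ∈ B_n × C_n : c ∈ b}, is irreducible: for all i ≠ j, no point-generated subframe of H_j is reducible to H_i. -/

import Mathlib

/-- A Kripke frame: a set of worlds with a binary relation. -/
structure Frame where
  World : Type
  rel : World → World → Prop

/-- `f` is a reduction (surjective p-morphism) of `F` to `G`. -/
def Reduction (F G : Frame) (f : F.World → G.World) : Prop :=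
  Function.Surjective f ∧
  (∀ w u, F.rel w u → G.rel (f w) (f u)) ∧
  (∀ w v, G.rel (f w) v → ∃ u, F.rel w u ∧ f u = v)

/-- `F` is reducible to `G`. -/
def Reducible (F G : Frame) : Prop := ∃ f, Reduction F G f

/-- The subframe of `F` generated by the point `w`. -/
def Frame.genSub (F : Frame) (w : F.World) : Frame :=
  ⟨{v // Relation.ReflTransGen F.rel w v}, fun a b => F.rel a.1 b.1⟩

/-- The worlds of the frame `H n`: the root `a` (encoded `none`), the
two-element subsets of `C n = {0, …, n+1}` (the set `B n`), and the elements of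
`C n` itself. -/
def HWorld (n : ℕ) : Type := Option (({s : Finset (Fin (n + 2)) // s.card = 2}) ⊕ Fin (n + 2))

/-- The relation of the frame `H n`: the root sees everything else, and a
two-element set `b ∈ B n` sees exactly its two elements. -/
def Hrel (n : ℕ) : HWorld n → HWorld n → Prop := fun x y =>
  match x, y with
  | none, some _ => True
  | some (Sum.inl b), some (Sum.inr c) => c ∈ b.1
  | _, _ => False

/-- The frame `H n`. -/
def HFrame (n : ℕ) : Frame := ⟨HWorld n, Hrel n⟩

/-!
A reduction reflects two-step paths (apply the back condition twice). `H i` has the path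
`a → {0, 1} → 0`, while in `H j` every two-step path starts at the root, so a subframe
generated by any other point reduces to no `H i`. The subframe generated by the root is
`H j` itself. A reduction `H j → H i` preserves and reflects dead ends, so it restricts to
a surjection `C j → C i`, and this map is injective: if `c₁ ≠ c₂` had the same image `d`,
the image of `{c₁, c₂}` would see some point other than `d`, which the back condition
would have to pull back to `c₁` or `c₂`. Hence `j + 2 = i + 2`.
-/

open Relation

namespace Frame

def IsDeadEnd (F : Frame) (w : F.World) : Prop := ∀ v, ¬ F.rel w v

def HasTwoStep (F : Frame) : Prop := ∃ w u v, F.rel w u ∧ F.rel u v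

theorem reduction_genSub_of_reachable (F : Frame) {w : F.World}
    (h : ∀ v, ReflTransGen F.rel w v) : Reduction F (F.genSub w) fun v => ⟨v, h v⟩ :=
  ⟨fun x => ⟨x.1, rfl⟩, fun _ _ huv => huv, fun _ v hv => ⟨v.1, hv, rfl⟩⟩

end Frame

namespace Reduction

variable {F G K : Frame} {f : F.World → G.World}

theorem comp {g : G.World → K.World} (hg : Reduction G K g) (hf : Reduction F G f) :
    Reduction F K (g ∘ f) := by
  refine ⟨hg.1.comp hf.1, fun w u h => hg.2.1 _ _ (hf.2.1 w u h), fun w v h => ?_⟩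
  obtain ⟨u, hu, rfl⟩ := hg.2.2 (f w) v h
  obtain ⟨u', hu', rfl⟩ := hf.2.2 w u hu
  exact ⟨u', hu', rfl⟩

theorem isDeadEnd_iff (hf : Reduction F G f) (w : F.World) :
    G.IsDeadEnd (f w) ↔ F.IsDeadEnd w := by
  refine ⟨fun h u hu => h _ (hf.2.1 w u hu), fun h v hv => ?_⟩
  obtain ⟨u, hu, -⟩ := hf.2.2 w v hv
  exact h u hu

theorem hasTwoStep (hf : Reduction F G f) (h : G.HasTwoStep) : F.HasTwoStep := by
  obtain ⟨x, y, z, hxy, hyz⟩ := h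
  obtain ⟨w, rfl⟩ := hf.1 x
  obtain ⟨u, hwu, rfl⟩ := hf.2.2 w y hxy
  obtain ⟨v, huv, rfl⟩ := hf.2.2 u z hyz
  exact ⟨w, u, v, hwu, huv⟩

end Reduction

section HFrame

variable {n : ℕ}

def pairZeroOne (n : ℕ) : {s : Finset (Fin (n + 2)) // s.card = 2} :=
  ⟨{0, 1}, Finset.card_pair (by simp)⟩

theorem reflTransGen_none_hrel (v : HWorld n) : ReflTransGen (Hrel n) none v := by
  rcases v with _ | x
  · exact .refl
  · exact .single trivial

theorem not_hrel_none (x : HWorld n) : ¬ Hrel n x none := by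
  rcases x with _ | (b | c) <;> exact id

theorem eq_none_of_hrel_of_hrel {x y z : HWorld n} (hxy : Hrel n x y) (hyz : Hrel n y z) :
    x = none := by
  rcases x with _ | (b | c) <;> rcases y with _ | (b' | c') <;> rcases z with _ | (b'' | c'') <;>
    first | rfl | exact absurd hxy id | exact absurd hyz id

theorem eq_none_of_reflTransGen_none {w : HWorld n} (h : ReflTransGen (Hrel n) w none) :
    w = none := by
  rcases h.cases_tail with h | ⟨c, -, hc⟩
  · exact h.symm
  · exact absurd hc (not_hrel_none c)

theorem hasTwoStep_hFrame (n : ℕ) : (HFrame n).HasTwoStep :=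
  ⟨none, some (.inl (pairZeroOne n)), some (.inr 0), trivial, Finset.mem_insert_self 0 {1}⟩

theorem not_hasTwoStep_genSub_some (x : {s : Finset (Fin (n + 2)) // s.card = 2} ⊕ Fin (n + 2)) :
    ¬ ((HFrame n).genSub (some x)).HasTwoStep := by
  rintro ⟨w, u, v, hwu, huv⟩
  have hw : w.1 = none := eq_none_of_hrel_of_hrel hwu huv
  have := w.2
  rw [hw] at this
  exact absurd (eq_none_of_reflTransGen_none this) (Option.some_ne_none x)

theorem isDeadEnd_hFrame_iff {x : HWorld n} :
    (HFrame n).IsDeadEnd x ↔ ∃ c, x = some (.inr c) := by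
  refine ⟨fun h => ?_, ?_⟩
  · rcases x with _ | (b | c)
    · exact absurd trivial (h (some (.inr 0)))
    · obtain ⟨e, he⟩ := Finset.card_pos.mp (by omega : 0 < b.1.card)
      exact absurd he (h (some (.inr e)))
    · exact ⟨c, rfl⟩
  · rintro ⟨c, rfl⟩ v
    rcases v with _ | (b | c') <;> exact id

theorem exists_hrel_ne_inr {x : HWorld n} (hx : ¬ (HFrame n).IsDeadEnd x) (d : Fin (n + 2)) :
    ∃ v, Hrel n x v ∧ v ≠ some (.inr d) := by
  rcases x with _ | (b | c)
  · exact ⟨some (.inl (pairZeroOne n)), trivial, fun h => Sum.inl_ne_inr (Option.some.inj h)⟩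
  · obtain ⟨e, he, hed⟩ := Finset.exists_mem_ne (by omega : 1 < b.1.card) d
    exact ⟨some (.inr e), he, fun h => hed (Sum.inr_injective (Option.some.inj h))⟩
  · exact absurd (isDeadEnd_hFrame_iff.2 ⟨c, rfl⟩) hx

theorem Reduction.eq_of_hFrame {i j : ℕ} {f : HWorld j → HWorld i}
    (hf : Reduction (HFrame j) (HFrame i) f) : j = i := by
  have hdead (c : Fin (j + 2)) : ∃ d, f (some (.inr c)) = some (.inr d) :=
    isDeadEnd_hFrame_iff.1 ((hf.isDeadEnd_iff _).2 (isDeadEnd_hFrame_iff.2 ⟨c, rfl⟩))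
  choose g hg using hdead
  have hsurj : Function.Surjective g := by
    intro d
    obtain ⟨x, hx⟩ := hf.1 (some (.inr d))
    have hx_dead : (HFrame j).IsDeadEnd x :=
      (hf.isDeadEnd_iff x).1 (hx ▸ isDeadEnd_hFrame_iff.2 ⟨d, rfl⟩)
    obtain ⟨c, rfl⟩ := isDeadEnd_hFrame_iff.1 hx_dead
    exact ⟨c, Sum.inr_injective (Option.some.inj ((hg c).symm.trans hx))⟩
  have hinj : Function.Injective g := by
    intro c₁ c₂ hc
    by_contra hne
    set b : HWorld j := some (.inl ⟨{c₁, c₂}, Finset.card_pair hne⟩)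
    have hb : ¬ (HFrame i).IsDeadEnd (f b) := fun h =>
      (hf.isDeadEnd_iff b).1 h (some (.inr c₁)) (by simp [b, HFrame, Hrel])
    obtain ⟨v, hv, hv_ne⟩ := exists_hrel_ne_inr hb (g c₁)
    obtain ⟨u, hbu, rfl⟩ := hf.2.2 b v hv
    rcases u with _ | (b' | c) <;> try exact absurd hbu id
    obtain rfl | rfl : c = c₁ ∨ c = c₂ := by simpa [b, HFrame, Hrel] using hbu
    · exact hv_ne (hg c)
    · exact hv_ne (hc ▸ hg c)
  simpa using Fintype.card_of_bijective ⟨hinj, hsurj⟩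

end HFrame

/-- The sequence `(H n)` is irreducible: for all `i ≠ j`, no point-generated
subframe of `H j` is reducible to `H i`. -/
theorem hframe_irreducible :
    ∀ i j : ℕ, i ≠ j → ∀ w : (HFrame j).World,
      ¬ Reducible ((HFrame j).genSub w) (HFrame i) := by
  rintro i j hij w ⟨f, hf⟩
  rcases w with _ | x
  · have hroot := (HFrame j).reduction_genSub_of_reachable reflTransGen_none_hrel
    exact hij (hf.comp hroot).eq_of_hFrame.symm
  · exact not_hasTwoStep_genSub_some x (hf.hasTwoStep (hasTwoStep_hFrame i))
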